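/- arXiv:math/9605224 — 8 statements merged into one kernel-verified Lean document; each statement's English description precedes it below -/
import Mathlib

section
/- Every pseudomultiplier of ℓ² (as a Hilbert space of functions on ℕ) is bounded. Precisely: if ψ : ℕ → ℂ and E is a closed subspace of ℓ² of finite codimension such that the pointwise product ψ·x lies in ℓ² for every x ∈ E, then ψ is a bounded function. -/
open Filter Topology

/-- Coordinate evaluation is continuous on `ℓ²`. -/
private lemma stmt6_key (v : ℕ → lp (fun _ : ℕ => ℂ) 2) (w : lp (fun _ : ℕ => ℂ) 2)
    (hv : Tendsto v atTop (𝓝 w)) (n : ℕ) :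
    Tendsto (fun k => (v k : ∀ _ : ℕ, ℂ) n) atTop (𝓝 ((w : ∀ _ : ℕ, ℂ) n)) := by
  rw [tendsto_iff_norm_sub_tendsto_zero] at hv ⊢
  refine squeeze_zero (fun k => norm_nonneg _) (fun k => ?_) hv
  have := lp.norm_apply_le_norm (by norm_num : (2 : ENNReal) ≠ 0) (v k - w) n
  simpa using this

/-- Coordinates of an `ℓ²` element tend to zero. -/
private lemma stmt6_coord0 (v : lp (fun _ : ℕ => ℂ) 2) :
    Tendsto (fun n => (v : ∀ _ : ℕ, ℂ) n) atTop (𝓝 0) := by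
  have hs : Summable (fun n => ‖(v : ∀ _ : ℕ, ℂ) n‖ ^ (2 : ENNReal).toReal) :=
    (lp.memℓp v).summable (by norm_num)
  have h2 : Tendsto (fun n => ‖(v : ∀ _ : ℕ, ℂ) n‖ ^ (2 : ENNReal).toReal) atTop (𝓝 0) :=
    hs.tendsto_atTop_zero
  rw [tendsto_zero_iff_norm_tendsto_zero]
  have hsq : Tendsto (fun n => Real.sqrt (‖(v : ∀ _ : ℕ, ℂ) n‖ ^ (2 : ENNReal).toReal))
      atTop (𝓝 (Real.sqrt 0)) := (Real.continuous_sqrt.tendsto 0).comp h2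
  have heq : ∀ n : ℕ, Real.sqrt (‖(v : ∀ _ : ℕ, ℂ) n‖ ^ (2 : ENNReal).toReal)
      = ‖(v : ∀ _ : ℕ, ℂ) n‖ := by
    intro n
    rw [show (2 : ENNReal).toReal = (2 : ℝ) by norm_num, Real.rpow_two]
    exact Real.sqrt_sq (norm_nonneg _)
  simpa [heq] using hsq

set_option maxHeartbeats 1000000 in
set_option synthInstance.maxHeartbeats 200000 in
/-- The projections of the standard basis vectors onto a finite-dimensional subspace
tend to zero in norm. -/
private lemma stmt6_proj (K : Submodule ℂ (lp (fun _ : ℕ => ℂ) 2))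
    [FiniteDimensional ℂ K] :
    Tendsto (fun n => ‖(K.orthogonalProjectionOnto (lp.single 2 n (1 : ℂ)) : K)‖) atTop (𝓝 0) := by
  haveI : CompleteSpace K := FiniteDimensional.complete ℂ K
  set b := stdOrthonormalBasis ℂ K with hb
  have hrepr : ∀ n : ℕ, (K.orthogonalProjectionOnto (lp.single 2 n (1 : ℂ)) : K)
      = ∑ i, (inner ℂ ((b i : lp (fun _ : ℕ => ℂ) 2)) (lp.single 2 n (1 : ℂ)) : ℂ) • b i :=
    fun n => b.orthogonalProjectionOnto_apply_eq_sum (lp.single 2 n (1 : ℂ))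
  have hQ0 : Tendsto (fun n => (K.orthogonalProjectionOnto (lp.single 2 n (1 : ℂ)) : K))
      atTop (𝓝 0) := by
    rw [funext hrepr]
    have hsum : Tendsto (fun n => ∑ i : Fin (Module.finrank ℂ K),
        (inner ℂ ((b i : lp (fun _ : ℕ => ℂ) 2)) (lp.single 2 n (1 : ℂ)) : ℂ) • b i)
        atTop (𝓝 (∑ _i : Fin (Module.finrank ℂ K), (0 : K))) := by
      apply tendsto_finset_sum
      intro i _
      have h0 : Tendsto (fun n =>
          (inner ℂ ((b i : lp (fun _ : ℕ => ℂ) 2)) (lp.single 2 n (1 : ℂ)) : ℂ)) atTop (𝓝 0) := by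
        have hinner : ∀ n : ℕ,
            (inner ℂ ((b i : lp (fun _ : ℕ => ℂ) 2)) (lp.single 2 n (1 : ℂ)) : ℂ)
            = (starRingEnd ℂ) (((b i : lp (fun _ : ℕ => ℂ) 2) : ∀ _ : ℕ, ℂ) n) := by
          intro n
          rw [lp.inner_single_right n (1 : ℂ) (b i : lp (fun _ : ℕ => ℂ) 2)]
          simp [RCLike.inner_apply]
        rw [funext hinner]
        have := stmt6_coord0 (b i : lp (fun _ : ℕ => ℂ) 2)
        simpa [Function.comp_def] using (continuous_star.tendsto (0 : ℂ)).comp this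
      simpa using h0.smul_const (b i)
    simpa using hsum
  simpa [Function.comp_def] using (continuous_norm.tendsto (0 : ↥K)).comp hQ0

set_option maxHeartbeats 1000000 in
set_option synthInstance.maxHeartbeats 200000 in
/-- Every pseudomultiplier of `ℓ²(ℕ)` is bounded: if `ψ : ℕ → ℂ` and `E`
is a closed subspace of `ℓ²` of finite codimension (i.e. `Eᗮ` finite-dimensional) such
that `ψ·x ∈ ℓ²` for all `x ∈ E`, then `ψ` is a bounded function. -/
theorem stmt6 (ψ : ℕ → ℂ) (E : Submodule ℂ (lp (fun _ : ℕ => ℂ) 2))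
    (hclosed : IsClosed (E : Set (lp (fun _ : ℕ => ℂ) 2)))
    (hcodim : FiniteDimensional ℂ Eᗮ)
    (hmul : ∀ x ∈ E, Memℓp (fun n => ψ n * x n) 2) :
    ∃ C : ℝ, ∀ n : ℕ, ‖ψ n‖ ≤ C := by
  classical
  haveI : CompleteSpace E := hclosed.completeSpace_coe
  -- the multiplication operator
  let T : E →ₗ[ℂ] lp (fun _ : ℕ => ℂ) 2 :=
    { toFun := fun x => ⟨fun n => ψ n * (x : lp (fun _ : ℕ => ℂ) 2) n, hmul x x.2⟩
      map_add' := fun x y => lp.ext (funext fun n => mul_add (ψ n) _ _)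
      map_smul' := fun c x => lp.ext (funext fun n => mul_left_comm (ψ n) c _) }
  have hTapp : ∀ (x : E) (n : ℕ),
      ((T x : lp (fun _ : ℕ => ℂ) 2) : ∀ _ : ℕ, ℂ) n
        = ψ n * (x : lp (fun _ : ℕ => ℂ) 2) n := by
    intro x n; rfl
  have hTcont : Continuous T := by
    apply T.continuous_of_seq_closed_graph
    intro u x y hu hTu
    apply lp.ext
    funext n
    have h1 := stmt6_key (fun k => (u k : lp (fun _ : ℕ => ℂ) 2)) (x : lp (fun _ : ℕ => ℂ) 2)
      ((continuous_subtype_val.tendsto _).comp hu) n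
    have h2 := stmt6_key (fun k => (T (u k) : lp (fun _ : ℕ => ℂ) 2)) y hTu n
    have h3 : Tendsto (fun k => ψ n * ((u k : lp (fun _ : ℕ => ℂ) 2) : ∀ _ : ℕ, ℂ) n) atTop
        (𝓝 (ψ n * (x : lp (fun _ : ℕ => ℂ) 2) n)) := h1.const_mul _
    have h4 := tendsto_nhds_unique h2 (by simpa only [hTapp] using h3)
    simpa [hTapp] using h4
  let T' : E →L[ℂ] lp (fun _ : ℕ => ℂ) 2 := ⟨T, hTcont⟩
  set K := Eᗮ with hK
  haveI : CompleteSpace K := FiniteDimensional.complete ℂ K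
  let e : ℕ → lp (fun _ : ℕ => ℂ) 2 := fun n => lp.single 2 n (1 : ℂ)
  have he_norm : ∀ n, ‖e n‖ = 1 := by
    intro n
    have := lp.norm_single (p := 2) (E := fun _ : ℕ => ℂ) (by norm_num) n (1 : ℂ)
    exact this.trans norm_one
  obtain ⟨N, hN⟩ : ∃ N, ∀ n ≥ N, ‖(K.orthogonalProjectionOnto (e n) : K)‖ ≤ 1 / 2 := by
    have h := ((stmt6_proj K).eventually
      (eventually_le_nhds (by norm_num : (0 : ℝ) < 1 / 2)))
    exact h.exists_forall_of_atTop
  -- main bound for n ≥ N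
  have main : ∀ n ≥ N, ‖ψ n‖ ≤ 4 * ‖T'‖ := by
    intro n hn
    set q : lp (fun _ : ℕ => ℂ) 2 := ((K.orthogonalProjectionOnto (e n) : K) : lp (fun _ : ℕ => ℂ) 2) with hq
    have hqnorm : ‖q‖ ≤ 1 / 2 := hN n hn
    have hw : e n - q ∈ E := by
      have h1 : e n - q ∈ Kᗮ := K.sub_starProjection_mem_orthogonal (e n)
      rwa [hK, Submodule.orthogonal_orthogonal] at h1
    set x : E := ⟨e n - q, hw⟩ with hx
    have hxnorm : ‖x‖ ≤ 2 := by
      have h1 : ‖e n - q‖ ≤ ‖e n‖ + ‖q‖ := norm_sub_le _ _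
      have h2 : ‖e n‖ + ‖q‖ ≤ 2 := by rw [he_norm n]; linarith
      have h3 := h1.trans h2
      simpa [hx] using h3
    have hen : ((e n : lp (fun _ : ℕ => ℂ) 2) : ∀ _ : ℕ, ℂ) n = 1 := by
      simp only [e]
      exact lp.single_apply_self (E := fun _ : ℕ => ℂ) 2 n (1 : ℂ)
    have hqn : ‖(q : ∀ _ : ℕ, ℂ) n‖ ≤ 1 / 2 :=
      (lp.norm_apply_le_norm (by norm_num : (2 : ENNReal) ≠ 0) q n).trans hqnorm
    have hxn : (1 : ℝ) / 2 ≤ ‖((x : lp (fun _ : ℕ => ℂ) 2) : ∀ _ : ℕ, ℂ) n‖ := by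
      have hxcoord : ((x : lp (fun _ : ℕ => ℂ) 2) : ∀ _ : ℕ, ℂ) n
          = 1 - (q : ∀ _ : ℕ, ℂ) n := by
        simp [hx, hen]
      rw [hxcoord]
      have h5 := norm_sub_norm_le (1 : ℂ) ((q : ∀ _ : ℕ, ℂ) n)
      simp only [norm_one] at h5
      linarith
    have hTx : ‖ψ n‖ * ‖((x : lp (fun _ : ℕ => ℂ) 2) : ∀ _ : ℕ, ℂ) n‖ ≤ ‖T'‖ * 2 := by
      have h1 : ‖((T' x : lp (fun _ : ℕ => ℂ) 2) : ∀ _ : ℕ, ℂ) n‖ ≤ ‖T' x‖ :=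
        lp.norm_apply_le_norm (by norm_num : (2 : ENNReal) ≠ 0) (T' x) n
      have h2 : ‖T' x‖ ≤ ‖T'‖ * ‖x‖ := T'.le_opNorm x
      have h3 : ((T' x : lp (fun _ : ℕ => ℂ) 2) : ∀ _ : ℕ, ℂ) n
          = ψ n * ((x : lp (fun _ : ℕ => ℂ) 2) : ∀ _ : ℕ, ℂ) n := hTapp x n
      calc ‖ψ n‖ * ‖((x : lp (fun _ : ℕ => ℂ) 2) : ∀ _ : ℕ, ℂ) n‖
          = ‖((T' x : lp (fun _ : ℕ => ℂ) 2) : ∀ _ : ℕ, ℂ) n‖ := by rw [h3, norm_mul]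
        _ ≤ ‖T'‖ * ‖x‖ := h1.trans h2
        _ ≤ ‖T'‖ * 2 := by
            have := norm_nonneg T'
            nlinarith
    nlinarith [norm_nonneg (ψ n), hxn, hTx]
  refine ⟨max (4 * ‖T'‖) (((Finset.range N).sup fun n => ‖ψ n‖₊ : NNReal) : ℝ), fun n => ?_⟩
  by_cases hn : n < N
  · have h1 : ‖ψ n‖₊ ≤ (Finset.range N).sup fun n => ‖ψ n‖₊ :=
      Finset.le_sup (f := fun n => ‖ψ n‖₊) (Finset.mem_range.2 hn)
    exact le_max_of_le_right (by exact_mod_cast h1)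
  · exact le_max_of_le_left (main n (le_of_not_gt hn))
end

section
/- The function φ(t) = √t is a 1-pseudomultiplier of the Sobolev space W = H¹(0,1): for every f ∈ W with f(0) = 0, the product √t · f(t) belongs to W. -/
/-!
For `f(t) = ∫₀ᵗ g` with `g ∈ L²(0,1)`, Cauchy–Schwarz gives `‖f(t)‖ ≤ √t ‖g‖₂`. Hence both `√t f`
and `f / (2√t)` are bounded, and `h = √t g + f / (2√t)` lies in `L²(0,1)`. That `h` is the
derivative of `√t f` follows by Fubini on the triangle `0 < y < x < t`:
`∫₀ᵗ f(x) / (2√x) dx = ∫₀ᵗ (√t - √y) g(y) dy`.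
-/

open MeasureTheory Set

theorem eqOn_inv_two_mul_sqrt_rpow {a b : ℝ} (ha : 0 ≤ a) (hb : 0 ≤ b) :
    EqOn (fun x => (2 * √x)⁻¹) (fun x => 2⁻¹ * x ^ (-(1 / 2) : ℝ)) (uIcc a b) := fun x hx => by
  dsimp only
  rw [Real.sqrt_eq_rpow, mul_inv, Real.rpow_neg ((le_min ha hb).trans hx.1)]

theorem intervalIntegrable_inv_two_mul_sqrt {a b : ℝ} (ha : 0 ≤ a) (hb : 0 ≤ b) :
    IntervalIntegrable (fun x => (2 * √x)⁻¹) volume a b :=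
  ((intervalIntegral.intervalIntegrable_rpow' (r := -(1 / 2)) (by norm_num)).const_mul 2⁻¹).congr
    ((eqOn_inv_two_mul_sqrt_rpow ha hb).mono uIoc_subset_uIcc).symm

theorem integral_inv_two_mul_sqrt {a b : ℝ} (ha : 0 ≤ a) (hb : 0 ≤ b) :
    ∫ x in a..b, (2 * √x)⁻¹ = √b - √a := by
  rw [intervalIntegral.integral_congr (eqOn_inv_two_mul_sqrt_rpow ha hb),
    intervalIntegral.integral_const_mul, integral_rpow (Or.inl (by norm_num)),
    Real.sqrt_eq_rpow, Real.sqrt_eq_rpow]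
  norm_num
  ring

variable {E : Type*} [NormedAddCommGroup E]

theorem MeasureTheory.MemLp.intervalIntegrable_of_le {g : ℝ → E} {a b : ℝ} {p : ENNReal}
    (hp : 1 ≤ p) (hab : a ≤ b) (hg : MemLp g p (volume.restrict (Ioo a b))) :
    IntervalIntegrable g volume a b :=
  (intervalIntegrable_iff_integrableOn_Ioo_of_le hab).2 (hg.integrable hp)

variable [NormedSpace ℝ E]

theorem intervalIntegral_smul_primitive_eq [CompleteSpace E] {w : ℝ → ℝ} {g : ℝ → E} {a b : ℝ}
    (hab : a ≤ b) (hw : IntervalIntegrable w volume a b) (hg : IntervalIntegrable g volume a b) :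
    ∫ x in a..b, w x • ∫ y in a..x, g y = ∫ y in a..b, (∫ x in y..b, w x) • g y := by
  set F : ℝ × ℝ → E := {p | p.2 < p.1}.indicator fun p => w p.1 • g p.2
  have hF : Integrable F ((volume.restrict (Ioc a b)).prod (volume.restrict (Ioc a b))) :=
    (hw.1.smul_prod hg.1).indicator (measurableSet_lt measurable_snd measurable_fst)
  simp only [intervalIntegral.integral_of_le hab]
  convert integral_integral_swap (f := fun x y => F (x, y)) hF using 1
  · refine setIntegral_congr_fun measurableSet_Ioc fun x hx => ?_
    have hFx : (fun y => F (x, y)) = (Iio x).indicator fun y => w x • g y := by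
      ext y; simp [F, indicator]
    have hIoo : Ioc a b ∩ Iio x = Ioo a x :=
      Set.ext fun y => ⟨fun h => ⟨h.1.1, h.2⟩, fun h => ⟨⟨h.1, h.2.le.trans hx.2⟩, h.2⟩⟩
    rw [hFx, setIntegral_indicator measurableSet_Iio, hIoo, integral_smul,
      intervalIntegral.integral_of_le hx.1.le, integral_Ioc_eq_integral_Ioo]
  · refine setIntegral_congr_fun measurableSet_Ioc fun y hy => ?_
    have hFy : (fun x => F (x, y)) = (Ioi y).indicator fun x => w x • g y := by
      ext x; simp [F, indicator]
    rw [hFy, setIntegral_indicator measurableSet_Ioi, Ioc_inter_Ioi, max_eq_right hy.1.le,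
      integral_smul_const, intervalIntegral.integral_of_le hy.2]

theorem intervalIntegral_sqrt_smul_add_inv_two_mul_sqrt_smul_primitive [CompleteSpace E]
    {g : ℝ → E} {t : ℝ} (ht : 0 ≤ t) (hg : IntervalIntegrable g volume 0 t) :
    ∫ x in 0..t, (√x • g x + (2 * √x)⁻¹ • ∫ y in 0..x, g y) = √t • ∫ x in 0..t, g x := by
  have hw := intervalIntegrable_inv_two_mul_sqrt le_rfl ht
  have hsqrt_g : IntervalIntegrable (fun x => √x • g x) volume 0 t :=
    hg.continuousOn_smul Real.continuous_sqrt.continuousOn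
  have hw_primitive : IntervalIntegrable (fun x => (2 * √x)⁻¹ • ∫ y in 0..x, g y) volume 0 t :=
    hw.smul_continuousOn (intervalIntegral.continuousOn_primitive_interval' hg left_mem_uIcc)
  have hdiff_g : IntervalIntegrable (fun x => (√t - √x) • g x) volume 0 t :=
    hg.continuousOn_smul (continuous_const.sub Real.continuous_sqrt).continuousOn
  calc ∫ x in 0..t, (√x • g x + (2 * √x)⁻¹ • ∫ y in 0..x, g y)
      = (∫ x in 0..t, √x • g x) + ∫ x in 0..t, (2 * √x)⁻¹ • ∫ y in 0..x, g y :=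
        intervalIntegral.integral_add hsqrt_g hw_primitive
    _ = (∫ x in 0..t, √x • g x) + ∫ x in 0..t, (√t - √x) • g x := by
        rw [intervalIntegral_smul_primitive_eq ht hw hg]
        refine congrArg _ (intervalIntegral.integral_congr fun y hy => ?_)
        rw [uIcc_of_le ht] at hy
        simp only [integral_inv_two_mul_sqrt hy.1 ht]
    _ = ∫ x in 0..t, √t • g x := by
        rw [← intervalIntegral.integral_add hsqrt_g hdiff_g]
        simp only [← add_smul, add_sub_cancel]
    _ = √t • ∫ x in 0..t, g x := intervalIntegral.integral_smul _ _

theorem norm_setIntegral_le_sqrt_measure_mul_eLpNorm {α : Type*} [MeasurableSpace α]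
    {μ : Measure α} {s : Set α} {g : α → E} (hs : μ s ≠ ⊤) (hg : MemLp g 2 (μ.restrict s)) :
    ‖∫ x in s, g x ∂μ‖ ≤ √(μ s).toReal * (eLpNorm g 2 (μ.restrict s)).toReal := by
  have hle : ‖∫ x in s, g x ∂μ‖ₑ ≤ μ s ^ (1 / 2 : ℝ) * eLpNorm g 2 (μ.restrict s) :=
    calc ‖∫ x in s, g x ∂μ‖ₑ ≤ eLpNorm g 1 (μ.restrict s) := by
          rw [eLpNorm_one_eq_lintegral_enorm]; exact enorm_integral_le_lintegral_enorm _
      _ ≤ eLpNorm g 2 (μ.restrict s) *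
            μ.restrict s univ ^ (1 / (1 : ENNReal).toReal - 1 / (2 : ENNReal).toReal) :=
          eLpNorm_le_eLpNorm_mul_rpow_measure_univ one_le_two hg.1
      _ = μ s ^ (1 / 2 : ℝ) * eLpNorm g 2 (μ.restrict s) := by
          rw [Measure.restrict_apply_univ, mul_comm]; norm_num
  rw [← toReal_enorm, Real.sqrt_eq_rpow, ENNReal.toReal_rpow, ← ENNReal.toReal_mul]
  exact ENNReal.toReal_mono (ENNReal.mul_ne_top (by simp [hs]) hg.eLpNorm_ne_top) hle

section PrimitiveOfL2

variable {g : ℝ → E} {a b : ℝ}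

theorem norm_intervalIntegral_le_sqrt_mul_eLpNorm {x : ℝ} (hx : x ∈ Icc a b)
    (hg : MemLp g 2 (volume.restrict (Ioo a b))) :
    ‖∫ y in a..x, g y‖ ≤ √(x - a) * (eLpNorm g 2 (volume.restrict (Ioo a b))).toReal := by
  have hle : volume.restrict (Ioo a x) ≤ volume.restrict (Ioo a b) :=
    Measure.restrict_mono (Ioo_subset_Ioo_right hx.2) le_rfl
  rw [intervalIntegral.integral_of_le hx.1, integral_Ioc_eq_integral_Ioo]
  calc _ ≤ √(volume (Ioo a x)).toReal * (eLpNorm g 2 (volume.restrict (Ioo a x))).toReal :=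
        norm_setIntegral_le_sqrt_measure_mul_eLpNorm measure_Ioo_lt_top.ne (hg.mono_measure hle)
    _ ≤ _ := by
        rw [Real.volume_Ioo, ENNReal.toReal_ofReal (sub_nonneg.2 hx.1)]
        gcongr
        exact hg.eLpNorm_ne_top

theorem aestronglyMeasurable_primitive (hab : a ≤ b) (hg : MemLp g 2 (volume.restrict (Ioo a b))) :
    AEStronglyMeasurable (fun x => ∫ y in a..x, g y) (volume.restrict (Ioo a b)) :=
  ((intervalIntegral.continuousOn_primitive_interval' (hg.intervalIntegrable_of_le one_le_two hab)
    left_mem_uIcc).mono (uIcc_of_le hab ▸ Ioo_subset_Icc_self)).aestronglyMeasurable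
    measurableSet_Ioo

theorem memLp_sqrt_smul_primitive (hb : 0 ≤ b) (hg : MemLp g 2 (volume.restrict (Ioo 0 b))) :
    MemLp (fun x => √x • ∫ y in 0..x, g y) 2 (volume.restrict (Ioo 0 b)) := by
  set C := (eLpNorm g 2 (volume.restrict (Ioo 0 b))).toReal
  refine MemLp.of_bound ((Real.continuous_sqrt.measurable.aestronglyMeasurable).smul
    (aestronglyMeasurable_primitive hb hg)) (b * C) ?_
  filter_upwards [ae_restrict_mem measurableSet_Ioo] with x hx
  have hprim := norm_intervalIntegral_le_sqrt_mul_eLpNorm (Ioo_subset_Icc_self hx) hg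
  rw [sub_zero] at hprim
  calc ‖√x • ∫ y in 0..x, g y‖ = √x * ‖∫ y in 0..x, g y‖ := by
        rw [norm_smul, Real.norm_of_nonneg (Real.sqrt_nonneg x)]
    _ ≤ √x * (√x * C) := by gcongr
    _ ≤ b * C := by rw [← mul_assoc, Real.mul_self_sqrt hx.1.le]; gcongr; exact hx.2.le

theorem memLp_inv_two_mul_sqrt_smul_primitive (hb : 0 ≤ b)
    (hg : MemLp g 2 (volume.restrict (Ioo 0 b))) :
    MemLp (fun x => (2 * √x)⁻¹ • ∫ y in 0..x, g y) 2 (volume.restrict (Ioo 0 b)) := by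
  set C := (eLpNorm g 2 (volume.restrict (Ioo 0 b))).toReal
  refine MemLp.of_bound
    (((Real.continuous_sqrt.measurable.const_mul 2).inv.aestronglyMeasurable).smul
      (aestronglyMeasurable_primitive hb hg)) (C / 2) ?_
  filter_upwards [ae_restrict_mem measurableSet_Ioo] with x hx
  have hprim := norm_intervalIntegral_le_sqrt_mul_eLpNorm (Ioo_subset_Icc_self hx) hg
  rw [sub_zero] at hprim
  have hsqrt : 0 < √x := Real.sqrt_pos.2 hx.1
  calc ‖(2 * √x)⁻¹ • ∫ y in 0..x, g y‖ = (2 * √x)⁻¹ * ‖∫ y in 0..x, g y‖ := by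
        rw [norm_smul, Real.norm_of_nonneg (by positivity)]
    _ ≤ (2 * √x)⁻¹ * (√x * C) := by gcongr
    _ = C / 2 := by field_simp

theorem memLp_sqrt_smul (hg : MemLp g 2 (volume.restrict (Ioo 0 b))) :
    MemLp (fun x => √x • g x) 2 (volume.restrict (Ioo 0 b)) := by
  refine hg.of_le_mul (c := √b)
    ((Real.continuous_sqrt.measurable.aestronglyMeasurable).smul hg.1) ?_
  filter_upwards [ae_restrict_mem measurableSet_Ioo] with x hx
  rw [norm_smul, Real.norm_of_nonneg (Real.sqrt_nonneg x)]
  gcongr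
  exact hx.2.le

end PrimitiveOfL2

theorem stmt9_general (f g : ℝ → ℂ)
    (hg : MemLp g 2 (volume.restrict (Set.Ioo (0:ℝ) 1)))
    (hac : ∀ t ∈ Set.Icc (0:ℝ) 1, f t = ∫ x in (0:ℝ)..t, g x) :
    MemLp (fun t => (Real.sqrt t : ℂ) * f t) 2 (volume.restrict (Set.Ioo (0:ℝ) 1)) ∧
    ∃ h : ℝ → ℂ, MemLp h 2 (volume.restrict (Set.Ioo (0:ℝ) 1)) ∧
      ∀ t ∈ Set.Icc (0:ℝ) 1, (Real.sqrt t : ℂ) * f t = ∫ x in (0:ℝ)..t, h x := by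
  have hsqrt_f : ∀ t ∈ Icc (0:ℝ) 1, (Real.sqrt t : ℂ) * f t = √t • ∫ x in (0:ℝ)..t, g x :=
    fun t ht => by rw [hac t ht, Complex.real_smul]
  refine ⟨(memLp_sqrt_smul_primitive zero_le_one hg).ae_eq ?_,
    fun x => √x • g x + (2 * √x)⁻¹ • ∫ y in (0:ℝ)..x, g y,
    (memLp_sqrt_smul hg).add (memLp_inv_two_mul_sqrt_smul_primitive zero_le_one hg),
    fun t ht => ?_⟩
  · filter_upwards [ae_restrict_mem measurableSet_Ioo] with t ht
    exact (hsqrt_f t (Ioo_subset_Icc_self ht)).symm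
  · have hg_t : MemLp g 2 (volume.restrict (Ioo 0 t)) :=
      hg.mono_measure (Measure.restrict_mono (Ioo_subset_Ioo_right ht.2) le_rfl)
    rw [hsqrt_f t ht, intervalIntegral_sqrt_smul_add_inv_two_mul_sqrt_smul_primitive ht.1
      (hg_t.intervalIntegrable_of_le one_le_two ht.1)]

/-- `φ(t) = √t` is a 1-pseudomultiplier of the Sobolev space `W = H¹(0,1)`:
if `f ∈ W` with `f(0) = 0` (i.e. `f` is absolutely continuous on `[0,1]` with
`f(t) = ∫₀ᵗ g` for some `g ∈ L²(0,1)`, and `f ∈ L²(0,1)`), then the product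
`t ↦ √t · f(t)` again belongs to `W`: it is square-integrable and absolutely continuous
on `[0,1]` with a square-integrable derivative. -/
theorem stmt9 (f g : ℝ → ℂ)
    (hf : MemLp f 2 (volume.restrict (Set.Ioo (0:ℝ) 1)))
    (hg : MemLp g 2 (volume.restrict (Set.Ioo (0:ℝ) 1)))
    (hac : ∀ t ∈ Set.Icc (0:ℝ) 1, f t = ∫ x in (0:ℝ)..t, g x) :
    MemLp (fun t => (Real.sqrt t : ℂ) * f t) 2 (volume.restrict (Set.Ioo (0:ℝ) 1)) ∧
    ∃ h : ℝ → ℂ, MemLp h 2 (volume.restrict (Set.Ioo (0:ℝ) 1)) ∧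
      ∀ t ∈ Set.Icc (0:ℝ) 1, (Real.sqrt t : ℂ) * f t = ∫ x in (0:ℝ)..t, h x :=
  stmt9_general f g hg hac
end

section
/- Let H be a Hilbert space of functions on Ω with nonsingular reproducing kernel k, and suppose L is a bounded operator on H, A is a positive operator on H of rank at most m, and φ : D_φ → ℂ (D_φ ⊆ Ω) satisfies L* k_λ = (1 − A)(conj(φ(λ)) k_λ) for all λ ∈ D_φ. Then for any ξ ∈ ℂ with |ξ| > ‖L‖, the equation φ(λ) = ξ has at most m solutions λ ∈ D_φ. -/
open scoped ComplexConjugate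

/-!
If more than `m` points `λ` of `D` had `φ λ = ξ`, the kernels `k_λ` would span a space of
dimension larger than `rank A`, so some nonzero `h` in that span satisfies `A h = 0`. On the
span, `L*` acts as `conj ξ • (1 - A)`, hence `L* h = conj ξ • h` and `‖ξ‖ ≤ ‖L*‖ = ‖L‖`.
-/

open Submodule in
theorem LinearMap.exists_mem_span_ne_zero_map_eq_zero {K V W ι : Type*} [DivisionRing K]
    [AddCommGroup V] [Module K V] [AddCommGroup W] [Module K W] [Fintype ι]
    (f : V →ₗ[K] W) {v : ι → V} (hv : LinearIndependent K v)
    (hrank : f.rank < Fintype.card ι) :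
    ∃ x ∈ span K (Set.range v), x ≠ 0 ∧ f x = 0 := by
  by_contra! hker
  have hfv : LinearIndependent K (f ∘ v) :=
    hv.map <| disjoint_def.mpr fun x hx hfx => by_contra fun hx0 => hker x hx hx0 hfx
  have := Module.Finite.span_of_finite K (Set.finite_range (f ∘ v))
  have hcard : (Fintype.card ι : Cardinal) ≤ f.rank :=
    calc (Fintype.card ι : Cardinal)
        = Module.rank K (span K (Set.range (f ∘ v))) := by
          rw [← finrank_span_eq_card hfv, Module.finrank_eq_rank]
      _ ≤ f.rank := rank_mono <| span_le.mpr <| Set.range_subset_iff.mpr fun i =>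
          LinearMap.mem_range_self f (v i)
  exact hrank.not_ge hcard

theorem ContinuousLinearMap.norm_le_opNorm_of_apply_eq_smul {𝕜 E : Type*}
    [NontriviallyNormedField 𝕜] [NormedAddCommGroup E] [NormedSpace 𝕜 E]
    (T : E →L[𝕜] E) {c : 𝕜} {x : E} (hx : x ≠ 0) (hTx : T x = c • x) : ‖c‖ ≤ ‖T‖ :=
  le_of_mul_le_mul_right (by simpa only [hTx, norm_smul] using T.le_opNorm x)
    (norm_pos_iff.mpr hx)

theorem stmt11_general {H Ω : Type*} [NormedAddCommGroup H] [InnerProductSpace ℂ H]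
    [CompleteSpace H]
    (kf : Ω → H)
    (hns : LinearIndependent ℂ kf)
    (L A : H →L[ℂ] H) (m : ℕ)
    (hrank : LinearMap.rank (A : H →ₗ[ℂ] H) ≤ m)
    (D : Set Ω) (φ : Ω → ℂ)
    (hL : ∀ l ∈ D, ContinuousLinearMap.adjoint L (kf l)
      = conj (φ l) • kf l - A (conj (φ l) • kf l)) :
    ∀ ξ : ℂ, ‖L‖ < ‖ξ‖ →
      ∀ s : Finset Ω, (↑s ⊆ {l ∈ D | φ l = ξ}) → s.card ≤ m := by
  intro ξ hξ s hs
  by_contra! hcard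
  obtain ⟨h, hspan, hne, hAh⟩ := (A : H →ₗ[ℂ] H).exists_mem_span_ne_zero_map_eq_zero
    (hns.comp ((↑) : s → Ω) Subtype.val_injective)
    (hrank.trans_lt (by simpa using hcard))
  have hLh : ContinuousLinearMap.adjoint L h = conj ξ • h := by
    have hLA : Set.EqOn (ContinuousLinearMap.adjoint L) ⇑(conj ξ • (1 - A) : H →L[ℂ] H)
        (Set.range (kf ∘ ((↑) : s → Ω))) := by
      rintro _ ⟨l, rfl⟩
      obtain ⟨hlD, hlξ⟩ := hs l.2
      simp [hL l hlD, hlξ, smul_sub]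
    simpa [hAh] using LinearMap.eqOn_span (f := (ContinuousLinearMap.adjoint L : H →ₗ[ℂ] H))
      (g := ((conj ξ • (1 - A) : H →L[ℂ] H) : H →ₗ[ℂ] H)) hLA hspan
  have hξL := (ContinuousLinearMap.adjoint L).norm_le_opNorm_of_apply_eq_smul hne hLh
  rw [RCLike.norm_conj, ContinuousLinearMap.adjoint.norm_map] at hξL
  exact hξL.not_gt hξ

/-- (Theorem `mplcty`.) Suppose `H` is a Hilbert function space on `Ω`
with nonsingular kernel (`kf` linearly independent), `L` bounded, `A` positive of rank
at most `m`, and `L* k_λ = (1 − A)(conj(φ(λ)) k_λ)` for all `λ` in the domain `D` of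
`φ`. Then for `|ξ| > ‖L‖` the equation `φ(λ) = ξ` has at most `m` solutions in `D`. -/
theorem stmt11 {H Ω : Type*} [NormedAddCommGroup H] [InnerProductSpace ℂ H]
    [CompleteSpace H]
    (ev : H →ₗ[ℂ] (Ω → ℂ)) (hinj : Function.Injective ev)
    (kf : Ω → H)
    (hrep : ∀ (f : H) (l : Ω), (inner ℂ (kf l) f : ℂ) = ev f l)
    (hns : LinearIndependent ℂ kf)
    (L A : H →L[ℂ] H) (m : ℕ)
    (hA : A.IsPositive) (hrank : LinearMap.rank (A : H →ₗ[ℂ] H) ≤ m)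
    (D : Set Ω) (φ : Ω → ℂ)
    (hL : ∀ l ∈ D, ContinuousLinearMap.adjoint L (kf l)
      = conj (φ l) • kf l - A (conj (φ l) • kf l)) :
    ∀ ξ : ℂ, ‖L‖ < ‖ξ‖ →
      ∀ s : Finset Ω, (↑s ⊆ {l ∈ D | φ l = ξ}) → s.card ≤ m :=
  stmt11_general kf hns L A m hrank D φ hL
end

section
/- Let H be a Hilbert space with a bounded operator M ∈ L(H), realized as a space of functions on Ω with nonsingular reproducing kernel. Let F be an m-dimensional subspace of H, and suppose D ⊆ Ω is a set of uniqueness for H and for the class HH+HH = {f₁f₂ + f₃f₄ : f_j ∈ H}. Suppose (Mh)(λ) = φ(λ)h(λ) for all h ∈ F^⊥ and λ ∈ D, where φ : D → ℂ. Then the set S = {λ ∈ Ω : k_λ ∈ F} contains at most m points, and there exists ψ : Ω∖S → ℂ with ψ = φ on D∖S and (Mh)(λ) = ψ(λ)h(λ) for all λ ∈ Ω∖S and h ∈ F^⊥. -/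
/-!
Multiplying `Mh = φh` for two functions of `Fᗮ` gives `(Mh₁)h₂ = (Mh₂)h₁` on `D`, and uniqueness
for `HH + HH` spreads this identity over all of `Ω`. Hence `(Mh)(λ)/h(λ)` does not depend on the
choice of `h ∈ Fᗮ` with `h(λ) ≠ 0`, and such an `h` exists exactly when `k_λ ∉ F = Fᗮᗮ`.
The kernels `k_λ` with `λ ∈ S` are linearly independent vectors of `F`, so there are at most `m`.
-/

open Module

theorem LinearIndependent.card_le_finrank_of_forall_mem {K V ι : Type*} [DivisionRing K]
    [AddCommGroup V] [Module K V] {v : ι → V} (hv : LinearIndependent K v)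
    (F : Submodule K V) [FiniteDimensional K F] (s : Finset ι) (hs : ∀ i ∈ s, v i ∈ F) :
    s.card ≤ finrank K F := by
  have hsF : LinearIndependent K (fun i : s => (⟨v i, hs i i.2⟩ : F)) :=
    LinearIndependent.of_comp F.subtype (hv.comp _ Subtype.val_injective)
  simpa using hsF.fintype_card_le_finrank

theorem Submodule.exists_mem_orthogonal_inner_ne_zero {𝕜 E : Type*} [RCLike 𝕜]
    [NormedAddCommGroup E] [InnerProductSpace 𝕜 E] (K : Submodule 𝕜 E)
    [K.HasOrthogonalProjection] {x : E} (hx : x ∉ K) : ∃ h ∈ Kᗮ, inner 𝕜 x h ≠ 0 := by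
  by_contra! hcon
  exact hx (K.orthogonal_orthogonal ▸ (Kᗮ.mem_orthogonal' x).2 hcon)

section DivisionSymbol

variable {H Ω : Type*}

open Classical in
/-- The paper's `ψ(λ) = (Mh)(λ) / h(λ)` for a chosen `h ∈ W` with `h(λ) ≠ 0`; the choice is
irrelevant as soon as `(Mh₁)(λ) h₂(λ) = (Mh₂)(λ) h₁(λ)` on `W`. -/
noncomputable def divisionSymbol (ev : H → Ω → ℂ) (M : H → H) (W : Set H) (l : Ω) : ℂ :=
  if h : ∃ h ∈ W, ev h l ≠ 0 then ev (M h.choose) l / ev h.choose l else 0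

variable {ev : H → Ω → ℂ} {M : H → H}

theorem eval_map_mul_eval_comm_of_uniqueness {D : Set Ω} {W : Set H} {φ : Ω → ℂ}
    (huniq : ∀ f₁ f₂ g₁ g₂ : H, (∀ l ∈ D, ev f₁ l * ev f₂ l = ev g₁ l * ev g₂ l) →
      ∀ l, ev f₁ l * ev f₂ l = ev g₁ l * ev g₂ l)
    (hM : ∀ h ∈ W, ∀ l ∈ D, ev (M h) l = φ l * ev h l)
    {h₁ h₂ : H} (h₁W : h₁ ∈ W) (h₂W : h₂ ∈ W) (l : Ω) :
    ev (M h₁) l * ev h₂ l = ev (M h₂) l * ev h₁ l :=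
  huniq _ _ _ _ (fun l hl => by rw [hM h₁ h₁W l hl, hM h₂ h₂W l hl]; ring) l

theorem eval_map_eq_divisionSymbol_mul {W : Set H} {l : Ω}
    (hcomm : ∀ h₁ ∈ W, ∀ h₂ ∈ W, ev (M h₁) l * ev h₂ l = ev (M h₂) l * ev h₁ l)
    (hex : ∃ h ∈ W, ev h l ≠ 0) {h : H} (hW : h ∈ W) :
    ev (M h) l = divisionSymbol ev M W l * ev h l := by
  obtain ⟨h₀W, h₀l⟩ := hex.choose_spec
  rw [divisionSymbol, dif_pos hex, div_mul_eq_mul_div, eq_div_iff h₀l]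
  exact hcomm _ hW _ h₀W

theorem divisionSymbol_eq {W : Set H} {l : Ω} {c : ℂ}
    (hM : ∀ h ∈ W, ev (M h) l = c * ev h l) (hex : ∃ h ∈ W, ev h l ≠ 0) :
    divisionSymbol ev M W l = c := by
  obtain ⟨h₀W, h₀l⟩ := hex.choose_spec
  rw [divisionSymbol, dif_pos hex, hM _ h₀W, mul_div_cancel_right₀ _ h₀l]

end DivisionSymbol

theorem stmt12_general {H Ω : Type*} [NormedAddCommGroup H] [InnerProductSpace ℂ H]
    (ev : H →ₗ[ℂ] (Ω → ℂ))
    (kf : Ω → H)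
    (hrep : ∀ (f : H) (l : Ω), (inner ℂ (kf l) f : ℂ) = ev f l)
    (hns : LinearIndependent ℂ kf)
    (M : H →L[ℂ] H) (F : Submodule ℂ H) (m : ℕ)
    [FiniteDimensional ℂ F] (hdim : Module.finrank ℂ F = m)
    (D : Set Ω)
    (huniqHH : ∀ f₁ f₂ f₃ f₄ g₁ g₂ g₃ g₄ : H,
      (∀ l ∈ D, ev f₁ l * ev f₂ l + ev f₃ l * ev f₄ l
              = ev g₁ l * ev g₂ l + ev g₃ l * ev g₄ l) →
      ∀ l : Ω, ev f₁ l * ev f₂ l + ev f₃ l * ev f₄ l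
             = ev g₁ l * ev g₂ l + ev g₃ l * ev g₄ l)
    (φ : Ω → ℂ)
    (hM : ∀ h ∈ Fᗮ, ∀ l ∈ D, ev (M h) l = φ l * ev h l) :
    (∀ s : Finset Ω, (↑s ⊆ {l : Ω | kf l ∈ F}) → s.card ≤ m) ∧
    ∃ ψ : Ω → ℂ,
      (∀ l ∈ D, kf l ∉ F → ψ l = φ l) ∧
      (∀ l : Ω, kf l ∉ F → ∀ h ∈ Fᗮ, ev (M h) l = ψ l * ev h l) := by
  have huniq : ∀ f₁ f₂ g₁ g₂ : H, (∀ l ∈ D, ev f₁ l * ev f₂ l = ev g₁ l * ev g₂ l) →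
      ∀ l, ev f₁ l * ev f₂ l = ev g₁ l * ev g₂ l := fun f₁ f₂ g₁ g₂ hD l => by
    simpa using huniqHH f₁ f₂ 0 0 g₁ g₂ 0 0 (by simpa using hD) l
  have hex : ∀ l, kf l ∉ F → ∃ h ∈ (Fᗮ : Set H), ev h l ≠ 0 := fun l hl => by
    simpa only [hrep, SetLike.mem_coe] using F.exists_mem_orthogonal_inner_ne_zero hl
  have hcomm : ∀ l, ∀ h₁ ∈ (Fᗮ : Set H), ∀ h₂ ∈ (Fᗮ : Set H),
      ev (M h₁) l * ev h₂ l = ev (M h₂) l * ev h₁ l := fun l h₁ h₁F h₂ h₂F =>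
    eval_map_mul_eval_comm_of_uniqueness huniq hM h₁F h₂F l
  refine ⟨fun s hs => hdim ▸ hns.card_le_finrank_of_forall_mem F s fun l hl => hs hl,
    divisionSymbol ev M Fᗮ, fun l hlD hlF => ?_, fun l hlF h hF => ?_⟩
  · exact divisionSymbol_eq (fun h hF => hM h hF l hlD) (hex l hlF)
  · exact eval_map_eq_divisionSymbol_mul (hcomm l) (hex l hlF) hF

/-- (Lemma 1.4.) Let `H` be a Hilbert function space on `Ω` with
nonsingular kernel (`kf` linearly independent), `M` a bounded operator, `F` an
`m`-dimensional subspace, and `D` a set of uniqueness for `H` and for the class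
`HH+HH`. If `(Mh)(λ) = φ(λ)h(λ)` for all `h ∈ Fᗮ` and `λ ∈ D`, then the set
`S = {λ : k_λ ∈ F}` has at most `m` points, and there is `ψ` agreeing with `φ` on
`D∖S` with `(Mh)(λ) = ψ(λ)h(λ)` for all `λ ∈ Ω∖S` and `h ∈ Fᗮ`. -/
theorem stmt12 {H Ω : Type*} [NormedAddCommGroup H] [InnerProductSpace ℂ H]
    [CompleteSpace H]
    (ev : H →ₗ[ℂ] (Ω → ℂ)) (hinj : Function.Injective ev)
    (kf : Ω → H)
    (hrep : ∀ (f : H) (l : Ω), (inner ℂ (kf l) f : ℂ) = ev f l)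
    (hns : LinearIndependent ℂ kf)
    (M : H →L[ℂ] H) (F : Submodule ℂ H) (m : ℕ)
    [FiniteDimensional ℂ F] (hdim : Module.finrank ℂ F = m)
    (D : Set Ω)
    (huniqH : ∀ h : H, (∀ l ∈ D, ev h l = 0) → h = 0)
    (huniqHH : ∀ f₁ f₂ f₃ f₄ g₁ g₂ g₃ g₄ : H,
      (∀ l ∈ D, ev f₁ l * ev f₂ l + ev f₃ l * ev f₄ l
              = ev g₁ l * ev g₂ l + ev g₃ l * ev g₄ l) →
      ∀ l : Ω, ev f₁ l * ev f₂ l + ev f₃ l * ev f₄ l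
             = ev g₁ l * ev g₂ l + ev g₃ l * ev g₄ l)
    (φ : Ω → ℂ)
    (hM : ∀ h ∈ Fᗮ, ∀ l ∈ D, ev (M h) l = φ l * ev h l) :
    (∀ s : Finset Ω, (↑s ⊆ {l : Ω | kf l ∈ F}) → s.card ≤ m) ∧
    ∃ ψ : Ω → ℂ,
      (∀ l ∈ D, kf l ∉ F → ψ l = φ l) ∧
      (∀ l : Ω, kf l ∉ F → ∀ h ∈ Fᗮ, ev (M h) l = ψ l * ev h l) :=
  stmt12_general ev kf hrep hns M F m hdim D huniqHH φ hM
end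

section
/- Let H be a Hilbert space of functions on Ω with nonsingular kernel, let ψ : D_ψ → ℂ with Ω∖D_ψ containing at most m−1 points (m ≥ 1), and suppose ψ is an m-pseudomultiplier but not an (m−1)-pseudomultiplier. Then there is a unique closed subspace E of codimension m in H with ψE ⊆ H|D_ψ. -/
/-!
The `h ∈ H` for which `ψ · (h|D)` extends to an element of `H` form a subspace. So if `E ≠ E'`
were two closed codimension-`m` subspaces with this property, then `E' ⊄ E`, and for
`v ∈ E' \ E` the subspace `E + ℂ v ⊆ E + E'` would have it too; it is closed, since it contains
the closed finite-codimensional `E`, and has codimension `m - 1`, contradicting the hypothesis.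
-/

open Module

namespace Submodule

variable {K V : Type*} [DivisionRing K] [AddCommGroup V] [Module K V]

theorem finiteDimensional_quotient_of_le {S T : Submodule K V} [FiniteDimensional K (V ⧸ S)]
    (hST : S ≤ T) : FiniteDimensional K (V ⧸ T) :=
  Module.Finite.of_surjective (factor hST) (factor_surjective hST)

theorem finrank_quotient_add_finrank_map_mkQ {S T : Submodule K V}
    [FiniteDimensional K (V ⧸ S)] (hST : S ≤ T) :
    finrank K (V ⧸ T) + finrank K (T.map S.mkQ) = finrank K (V ⧸ S) := by
  rw [← (quotientQuotientEquivQuotient S T hST).finrank_eq]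
  exact finrank_quotient_add_finrank _

theorem eq_of_le_of_finrank_quotient_eq {S T : Submodule K V} [FiniteDimensional K (V ⧸ S)]
    (hST : S ≤ T) (h : finrank K (V ⧸ S) = finrank K (V ⧸ T)) : S = T := by
  have hmap : finrank K (T.map S.mkQ) = 0 := by
    have := finrank_quotient_add_finrank_map_mkQ hST
    omega
  rw [finrank_eq_zero, ← LinearMap.le_ker_iff_map, ker_mkQ] at hmap
  exact le_antisymm hST hmap

theorem finrank_quotient_sup_span_singleton_add_one {S : Submodule K V}
    [FiniteDimensional K (V ⧸ S)] {v : V} (hv : v ∉ S) :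
    finrank K (V ⧸ (S ⊔ K ∙ v)) + 1 = finrank K (V ⧸ S) := by
  have hv' : S.mkQ v ≠ 0 := by simpa using hv
  rw [← finrank_quotient_add_finrank_map_mkQ (le_sup_left : S ≤ S ⊔ K ∙ v), map_sup,
    mkQ_map_self, bot_sup_eq, map_span, Set.image_singleton, finrank_span_singleton hv']

section Topology

variable {𝕜 E : Type*} [NontriviallyNormedField 𝕜] [CompleteSpace 𝕜]
  [AddCommGroup E] [TopologicalSpace E] [IsTopologicalAddGroup E] [Module 𝕜 E]
  [ContinuousSMul 𝕜 E]

theorem exists_isClosed_le_sup_finrank_quotient_add_one {S T : Submodule 𝕜 E}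
    (hS : IsClosed (S : Set E)) [FiniteDimensional 𝕜 (E ⧸ S)] (hTS : ¬ T ≤ S) :
    ∃ F : Submodule 𝕜 E, F ≤ S ⊔ T ∧ IsClosed (F : Set E) ∧ FiniteDimensional 𝕜 (E ⧸ F) ∧
      finrank 𝕜 (E ⧸ F) + 1 = finrank 𝕜 (E ⧸ S) := by
  obtain ⟨v, hvT, hvS⟩ := SetLike.not_le_iff_exists.mp hTS
  have hSF : S ≤ S ⊔ 𝕜 ∙ v := le_sup_left
  refine ⟨S ⊔ 𝕜 ∙ v, sup_le_sup_left ((span_singleton_le_iff_mem v T).mpr hvT) S,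
    isClosed_mono_of_finiteDimensional_quotient hS hSF, finiteDimensional_quotient_of_le hSF,
    finrank_quotient_sup_span_singleton_add_one hvS⟩

end Topology

end Submodule

/-- `E ≤ pseudomultiplierDomain ev D ψ` is the condition `ψE ⊆ H|D`. -/
def pseudomultiplierDomain {R H Ω : Type*} [CommSemiring R] [AddCommMonoid H] [Module R H]
    (ev : H →ₗ[R] (Ω → R)) (D : Set Ω) (ψ : Ω → R) : Submodule R H where
  carrier := {h | ∃ g : H, ∀ l ∈ D, ev g l = ψ l * ev h l}
  zero_mem' := ⟨0, fun l _ => by simp⟩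
  add_mem' := by
    rintro a b ⟨ga, hga⟩ ⟨gb, hgb⟩
    exact ⟨ga + gb, fun l hl => by simp [hga l hl, hgb l hl, mul_add]⟩
  smul_mem' := by
    rintro c h ⟨g, hg⟩
    exact ⟨c • g, fun l hl => by simp [hg l hl, mul_left_comm]⟩

theorem stmt13_general {H Ω : Type*} [NormedAddCommGroup H] [InnerProductSpace ℂ H]
    (ev : H →ₗ[ℂ] (Ω → ℂ))
    (m : ℕ)
    (D : Set Ω) (ψ : Ω → ℂ)
    (hmps : ∃ E : Submodule ℂ H, IsClosed (E : Set H) ∧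
      FiniteDimensional ℂ (H ⧸ E) ∧ Module.finrank ℂ (H ⧸ E) = m ∧
      ∀ h ∈ E, ∃ g : H, ∀ l ∈ D, ev g l = ψ l * ev h l)
    (hnot : ¬ ∃ E : Submodule ℂ H, IsClosed (E : Set H) ∧
      FiniteDimensional ℂ (H ⧸ E) ∧ Module.finrank ℂ (H ⧸ E) = m - 1 ∧
      ∀ h ∈ E, ∃ g : H, ∀ l ∈ D, ev g l = ψ l * ev h l) :
    ∃! E : Submodule ℂ H, IsClosed (E : Set H) ∧
      FiniteDimensional ℂ (H ⧸ E) ∧ Module.finrank ℂ (H ⧸ E) = m ∧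
      ∀ h ∈ E, ∃ g : H, ∀ l ∈ D, ev g l = ψ l * ev h l := by
  obtain ⟨E, hE, hEfd, hEm, hEψ⟩ := hmps
  refine ⟨E, ⟨hE, hEfd, hEm, hEψ⟩, ?_⟩
  rintro E' ⟨-, hE'fd, hE'm, hE'ψ⟩
  by_contra hne
  have hE'E : ¬ E' ≤ E := fun hle =>
    hne (Submodule.eq_of_le_of_finrank_quotient_eq hle (hE'm.trans hEm.symm))
  obtain ⟨F, hF, hFc, hFfd, hFm⟩ :=
    Submodule.exists_isClosed_le_sup_finrank_quotient_add_one hE hE'E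
  have hFψ : F ≤ pseudomultiplierDomain ev D ψ :=
    hF.trans (sup_le (fun h => hEψ h) (fun h => hE'ψ h))
  exact hnot ⟨F, hFc, hFfd, by omega, fun h hh => hFψ hh⟩

/-- (Note 3.) If `ψ`, defined off a set of at most `m−1` points
(`m ≥ 1`), is an `m`-pseudomultiplier but not an `(m−1)`-pseudomultiplier of a Hilbert
function space `H` with nonsingular kernel, then there is a *unique* closed subspace
`E ⊆ H` of codimension `m` with `ψE ⊆ H|D_ψ`. -/
theorem stmt13 {H Ω : Type*} [NormedAddCommGroup H] [InnerProductSpace ℂ H]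
    [CompleteSpace H]
    (ev : H →ₗ[ℂ] (Ω → ℂ)) (hinj : Function.Injective ev)
    (kf : Ω → H)
    (hrep : ∀ (f : H) (l : Ω), (inner ℂ (kf l) f : ℂ) = ev f l)
    (hns : LinearIndependent ℂ kf)
    (m : ℕ) (hm : 1 ≤ m)
    (D : Set Ω) (ψ : Ω → ℂ)
    (hD : ∀ s : Finset Ω, (↑s ⊆ Dᶜ) → s.card ≤ m - 1)
    (hmps : ∃ E : Submodule ℂ H, IsClosed (E : Set H) ∧
      FiniteDimensional ℂ (H ⧸ E) ∧ Module.finrank ℂ (H ⧸ E) = m ∧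
      ∀ h ∈ E, ∃ g : H, ∀ l ∈ D, ev g l = ψ l * ev h l)
    (hnot : ¬ ∃ E : Submodule ℂ H, IsClosed (E : Set H) ∧
      FiniteDimensional ℂ (H ⧸ E) ∧ Module.finrank ℂ (H ⧸ E) = m - 1 ∧
      ∀ h ∈ E, ∃ g : H, ∀ l ∈ D, ev g l = ψ l * ev h l) :
    ∃! E : Submodule ℂ H, IsClosed (E : Set H) ∧
      FiniteDimensional ℂ (H ⧸ E) ∧ Module.finrank ℂ (H ⧸ E) = m ∧
      ∀ h ∈ E, ∃ g : H, ∀ l ∈ D, ev g l = ψ l * ev h l :=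
  stmt13_general ev m D ψ hmps hnot
end

section
/- The function z (the identity function) is not a pseudomultiplier of the Fock space Φ. Precisely: for every t ≥ 0 and every m ∈ ℕ, the kernel (λ,μ) ↦ (t² − λ·conj(μ)) e^{λ conj(μ)} on ℂ does not have at most m negative squares; equivalently, the power series (t² − w)e^w = t² + Σ_{n≥1} (t²/n − 1) w^n/(n−1)! has infinitely many negative coefficients. -/
open scoped ComplexConjugate
open Finset

/-- Bound on the moment sums. -/
lemma stmt14_aux_bound {n : ℕ} (c lam : Fin n → ℂ) :
    ∃ B R : ℝ, 0 ≤ B ∧ 0 ≤ R ∧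
      ∀ k : ℕ, Complex.normSq (∑ i, c i * lam i ^ k) ≤ B * R ^ k := by
  refine ⟨(∑ i, ‖c i‖) ^ 2, (∑ i, ‖lam i‖) ^ 2, sq_nonneg _, sq_nonneg _, fun k => ?_⟩
  set B := ∑ i, ‖c i‖ with hB
  set R := ∑ i, ‖lam i‖ with hR
  have hRnn : 0 ≤ R := Finset.sum_nonneg fun i _ => norm_nonneg _
  have hRi : ∀ i, ‖lam i‖ ≤ R := fun i =>
    Finset.single_le_sum (fun j _ => norm_nonneg _) (Finset.mem_univ i)
  have hu : ‖∑ i, c i * lam i ^ k‖ ≤ B * R ^ k := by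
    calc ‖∑ i, c i * lam i ^ k‖ ≤ ∑ i, ‖c i * lam i ^ k‖ := norm_sum_le _ _
      _ ≤ ∑ i, ‖c i‖ * R ^ k := by
          refine Finset.sum_le_sum fun i _ => ?_
          rw [norm_mul, norm_pow]
          exact mul_le_mul_of_nonneg_left
            (pow_le_pow_left₀ (norm_nonneg _) (hRi i) k) (norm_nonneg _)
      _ = B * R ^ k := by rw [← Finset.sum_mul]
  have h1 : Complex.normSq (∑ i, c i * lam i ^ k) = ‖∑ i, c i * lam i ^ k‖ ^ 2 := by
    rw [Complex.sq_norm]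
  rw [h1]
  calc ‖∑ i, c i * lam i ^ k‖ ^ 2 ≤ (B * R ^ k) ^ 2 :=
        pow_le_pow_left₀ (norm_nonneg _) hu 2
    _ = B ^ 2 * (R ^ 2) ^ k := by ring

/-- Summability of normSq-moments over factorial. -/
lemma stmt14_aux_summable {n : ℕ} (c lam : Fin n → ℂ) (s : ℕ) :
    Summable (fun k : ℕ =>
      Complex.normSq (∑ i, c i * lam i ^ (k + s)) / (k.factorial : ℝ)) := by
  obtain ⟨B, R, hB, hR, hbd⟩ := stmt14_aux_bound c lam
  have hsum : Summable (fun k : ℕ => (B * R ^ s * R ^ k) / (k.factorial : ℝ)) := by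
    have := (Real.summable_pow_div_factorial R).mul_left (B * R ^ s)
    refine this.congr fun k => ?_
    ring
  refine hsum.of_nonneg_of_le
    (fun k => div_nonneg (Complex.normSq_nonneg _) (Nat.cast_nonneg _)) (fun k => ?_)
  have h1 : Complex.normSq (∑ i, c i * lam i ^ (k + s)) ≤ B * R ^ s * R ^ k := by
    calc Complex.normSq (∑ i, c i * lam i ^ (k + s)) ≤ B * R ^ (k + s) := hbd (k + s)
      _ = B * R ^ s * R ^ k := by ring
  gcongr

/-- The per-coefficient identity. -/
lemma stmt14_aux_key {n : ℕ} (T : ℝ) (c lam : Fin n → ℂ)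
    (hreal : ∀ i, conj (lam i) = lam i) (k : ℕ) :
    ∑ i, ∑ j, conj (c i) * (((T:ℂ)^2 - lam i * conj (lam j)) *
        ((lam i * conj (lam j)) ^ k / (k.factorial : ℂ))) * c j
      = (((T^2 * Complex.normSq (∑ i, c i * lam i ^ k)
          - Complex.normSq (∑ i, c i * lam i ^ (k+1))) / (k.factorial : ℝ) : ℝ) : ℂ) := by
  have hconj : ∀ s : ℕ, (↑(Complex.normSq (∑ i, c i * lam i ^ s)) : ℂ)
      = (∑ i, conj (c i) * lam i ^ s) * (∑ j, c j * lam j ^ s) := by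
    intro s
    rw [Complex.normSq_eq_conj_mul_self]
    congr 1
    rw [map_sum]
    refine Finset.sum_congr rfl fun i _ => ?_
    rw [map_mul, map_pow, hreal]
  push_cast
  rw [hconj, hconj]
  rw [Finset.sum_mul_sum, Finset.sum_mul_sum]
  simp only [hreal, Finset.mul_sum, ← Finset.sum_sub_distrib, Finset.sum_div]
  refine Finset.sum_congr rfl fun i _ => Finset.sum_congr rfl fun j _ => ?_
  ring

/-- The double sum equals a coerced real tsum. -/
lemma stmt14_aux_eq {n : ℕ} (T : ℝ) (c lam : Fin n → ℂ)
    (hreal : ∀ i, conj (lam i) = lam i) :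
    (∑ i, ∑ j, conj (c i) * (((T:ℂ)^2 - lam i * conj (lam j)) *
        Complex.exp (lam i * conj (lam j))) * c j)
      = ((∑' k : ℕ, (T^2 * Complex.normSq (∑ i, c i * lam i ^ k)
          - Complex.normSq (∑ i, c i * lam i ^ (k+1))) / (k.factorial : ℝ) : ℝ) : ℂ) := by
  have hterm : ∀ i j : Fin n,
      conj (c i) * (((T:ℂ)^2 - lam i * conj (lam j)) *
        Complex.exp (lam i * conj (lam j))) * c j
      = ∑' k : ℕ, conj (c i) * (((T:ℂ)^2 - lam i * conj (lam j)) *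
          ((lam i * conj (lam j)) ^ k / (k.factorial : ℂ))) * c j := by
    intro i j
    rw [Complex.exp_eq_exp_ℂ, NormedSpace.exp_eq_tsum_div, ← tsum_mul_left,
      ← tsum_mul_left, ← tsum_mul_right]
  have hsummable : ∀ i j : Fin n, Summable (fun k : ℕ =>
      conj (c i) * (((T:ℂ)^2 - lam i * conj (lam j)) *
        ((lam i * conj (lam j)) ^ k / (k.factorial : ℂ))) * c j) := by
    intro i j
    have := (NormedSpace.expSeries_div_summable (lam i * conj (lam j))).mul_left
      (conj (c i) * ((T:ℂ)^2 - lam i * conj (lam j)))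
    have := this.mul_right (c j)
    refine this.congr fun k => ?_
    ring
  calc (∑ i, ∑ j, conj (c i) * (((T:ℂ)^2 - lam i * conj (lam j)) *
        Complex.exp (lam i * conj (lam j))) * c j)
      = ∑ i, ∑ j, ∑' k : ℕ, conj (c i) * (((T:ℂ)^2 - lam i * conj (lam j)) *
          ((lam i * conj (lam j)) ^ k / (k.factorial : ℂ))) * c j := by
        exact Finset.sum_congr rfl fun i _ => Finset.sum_congr rfl fun j _ => hterm i j
    _ = ∑' k : ℕ, ∑ i, ∑ j, conj (c i) * (((T:ℂ)^2 - lam i * conj (lam j)) *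
          ((lam i * conj (lam j)) ^ k / (k.factorial : ℂ))) * c j := by
        rw [show (∑ i : Fin n, ∑ j : Fin n, ∑' k : ℕ, conj (c i) * (((T:ℂ)^2 - lam i * conj (lam j)) *
          ((lam i * conj (lam j)) ^ k / (k.factorial : ℂ))) * c j)
          = ∑ i : Fin n, ∑' k : ℕ, ∑ j : Fin n, conj (c i) * (((T:ℂ)^2 - lam i * conj (lam j)) *
          ((lam i * conj (lam j)) ^ k / (k.factorial : ℂ))) * c j from
          Finset.sum_congr rfl fun i _ => (Summable.tsum_finsetSum (fun j _ => hsummable i j)).symm]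
        exact (Summable.tsum_finsetSum (fun i _ => summable_sum (fun j _ => hsummable i j))).symm
    _ = ∑' k : ℕ, (((T^2 * Complex.normSq (∑ i, c i * lam i ^ k)
          - Complex.normSq (∑ i, c i * lam i ^ (k+1))) / (k.factorial : ℝ) : ℝ) : ℂ) :=
        tsum_congr fun k => stmt14_aux_key T c lam hreal k
    _ = _ := by rw [Complex.ofReal_tsum]

/-- The function `z` is not a pseudomultiplier of the Fock space: for
every `t ≥ 0` and `m ∈ ℕ`, the coefficients `t²/n − 1` of
`(t² − w)e^w = t² + Σ_{n≥1} (t²/n − 1) wⁿ/(n−1)!` are negative for infinitely many `n`,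
and the kernel `(λ,μ) ↦ (t² − λ conj(μ)) e^{λ conj(μ)}` does not have at most `m`
negative squares: some finite matrix `[K(λ_i,λ_j)]` is negative definite on a subspace
of dimension `m+1`. -/
theorem stmt14 (t : ℝ) (ht : 0 ≤ t) (m : ℕ) :
    {n : ℕ | 1 ≤ n ∧ t ^ 2 / (n : ℝ) - 1 < 0}.Infinite ∧
    ∃ (n : ℕ) (lam : Fin n → ℂ) (V : Submodule ℂ (Fin n → ℂ)),
      Module.finrank ℂ V = m + 1 ∧
      ∀ c ∈ V, c ≠ 0 →
        (∑ i : Fin n, ∑ j : Fin n,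
          conj (c i) * (((t : ℂ) ^ 2 - lam i * conj (lam j)) *
            Complex.exp (lam i * conj (lam j))) * c j).re < 0 := by
  have htN : t ^ 2 ≤ (⌈t ^ 2⌉₊ : ℝ) := Nat.le_ceil _
  set N : ℕ := ⌈t ^ 2⌉₊ with hNdef
  constructor
  · apply Set.infinite_of_injective_forall_mem (f := fun k : ℕ => k + N + 1)
    · intro a b h
      simp only [add_left_inj] at h
      exact h
    · intro k
      refine ⟨by omega, ?_⟩
      have hpos : (0:ℝ) < ((k + N + 1 : ℕ) : ℝ) := by positivity
      rw [sub_neg, div_lt_one hpos]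
      calc t ^ 2 ≤ (N : ℝ) := htN
        _ < ((k + N + 1 : ℕ) : ℝ) := by push_cast; linarith
  · set n : ℕ := N + m + 2 with hneq
    have hle : N + 1 ≤ n := by omega
    set lam : Fin n → ℂ := fun i => (((i : ℕ) + 1 : ℕ) : ℂ) with hlam
    have hreal : ∀ i, conj (lam i) = lam i := fun i => Complex.conj_natCast _
    have hinj : Function.Injective lam := by
      intro i j h
      simp only [hlam, Nat.cast_inj] at h
      exact Fin.ext (by omega)
    have hdetT : ((Matrix.vandermonde lam).transpose).det ≠ 0 := by
      rw [Matrix.det_transpose, Ne, Matrix.det_vandermonde_eq_zero_iff]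
      rintro ⟨i, j, hv, hij⟩
      exact hij (hinj hv)
    have hInv : Invertible (Matrix.vandermonde lam).transpose :=
      ((Matrix.vandermonde lam).transpose).invertibleOfIsUnitDet (isUnit_iff_ne_zero.mpr hdetT)
    set e := Matrix.toLinearEquiv' _ hInv with hedef
    have he : ∀ (c : Fin n → ℂ) (j : Fin n), e c j = ∑ i, c i * lam i ^ (j : ℕ) := by
      intro c j
      show ((Matrix.vandermonde lam).transpose).mulVec c j = _
      simp only [Matrix.mulVec, dotProduct, Matrix.transpose_apply,
        Matrix.vandermonde]
      exact Finset.sum_congr rfl fun i _ => mul_comm _ _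
    set π := LinearMap.funLeft ℂ ℂ (Fin.castLE hle) with hπdef
    have hπ : Function.Surjective π :=
      LinearMap.funLeft_surjective_of_injective ℂ ℂ _ (Fin.castLE_injective hle)
    have hWrank : Module.finrank ℂ (LinearMap.ker π) = m + 1 := by
      have h3 := LinearMap.finrank_range_add_finrank_ker π
      rw [LinearMap.range_eq_top.mpr hπ, finrank_top] at h3
      simp only [Module.finrank_fin_fun] at h3
      omega
    refine ⟨n, lam, (LinearMap.ker π).comap e.toLinearMap, ?_, ?_⟩
    · rw [Submodule.comap_equiv_eq_map_symm, LinearEquiv.finrank_map_eq]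
      exact hWrank
    · intro c hc hc0
      have h0 : π (e c) = 0 := by
        have := (Submodule.mem_comap.mp hc)
        exact LinearMap.mem_ker.mp this
      have hmem : ∀ k : ℕ, k ≤ N → (∑ i, c i * lam i ^ k) = 0 := by
        intro k hk
        have h1 := congrFun h0 ⟨k, by omega⟩
        rw [hπdef, LinearMap.funLeft_apply, he] at h1
        simpa using h1
      -- find a nonvanishing coordinate beyond N
      have hec : e c ≠ 0 := fun h => hc0 (e.map_eq_zero_iff.mp h)
      obtain ⟨j, hj⟩ : ∃ j : Fin n, e c j ≠ 0 := by
        by_contra h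
        push_neg at h
        exact hec (funext h)
      have hj' : (∑ i, c i * lam i ^ (j : ℕ)) ≠ 0 := by rwa [← he c j]
      have hjN : N < (j : ℕ) := by
        by_contra h
        push_neg at h
        exact hj' (hmem _ h)
      -- analytic part
      rw [stmt14_aux_eq t c lam hreal, Complex.ofReal_re]
      set q : ℕ → ℝ := fun k => Complex.normSq (∑ i, c i * lam i ^ k) with hqdef
      have hqnn : ∀ k, 0 ≤ q k := fun k => Complex.normSq_nonneg _
      have hq0 : ∀ k, k ≤ N → q k = 0 := fun k hk => by
        rw [hqdef]; simp only [hmem k hk, map_zero]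
      have h1 : Summable (fun k => q k / (k.factorial : ℝ)) := by
        have := stmt14_aux_summable c lam 0
        simpa using this
      have h2 : Summable (fun k => q (k + 1) / (k.factorial : ℝ)) :=
        stmt14_aux_summable c lam 1
      have h1' : Summable (fun k => q (k + 1) / ((k + 1).factorial : ℝ)) :=
        h1.comp_injective (add_left_injective 1)
      have hS1shift : ∑' k, q k / (k.factorial : ℝ)
          = ∑' k, q (k + 1) / ((k + 1).factorial : ℝ) := by
        rw [Summable.tsum_eq_zero_add h1, hq0 0 (Nat.zero_le N)]
        simp
      have hcompare : ((N : ℝ) + 1) * ∑' k, q k / (k.factorial : ℝ)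
          ≤ ∑' k, q (k + 1) / (k.factorial : ℝ) := by
        rw [hS1shift, ← tsum_mul_left]
        refine Summable.tsum_le_tsum (fun k => ?_) (h1'.mul_left _) h2
        by_cases hk : k + 1 ≤ N
        · simp [hq0 (k + 1) hk]
        · have hkN : N ≤ k := by omega
          have hfact : (((k + 1).factorial : ℕ) : ℝ) = ((k:ℝ) + 1) * (k.factorial : ℝ) := by
            rw [Nat.factorial_succ]; push_cast; ring
          rw [hfact]
          have heq : ((N : ℝ) + 1) * (q (k + 1) / (((k:ℝ) + 1) * (k.factorial : ℝ)))
              = (((N : ℝ) + 1) / ((k:ℝ) + 1)) * (q (k + 1) / (k.factorial : ℝ)) := by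
            have hk0 : ((k:ℝ) + 1) ≠ 0 := by positivity
            have hf0 : ((k.factorial : ℕ) : ℝ) ≠ 0 := by positivity
            field_simp
          rw [heq]
          have hdle : ((N : ℝ) + 1) / ((k:ℝ) + 1) ≤ 1 := by
            rw [div_le_one (by positivity)]
            have : (N : ℝ) ≤ (k : ℝ) := by exact_mod_cast hkN
            linarith
          calc (((N : ℝ) + 1) / ((k:ℝ) + 1)) * (q (k + 1) / (k.factorial : ℝ))
              ≤ 1 * (q (k + 1) / (k.factorial : ℝ)) :=
                mul_le_mul_of_nonneg_right hdle (div_nonneg (hqnn _) (by positivity))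
            _ = q (k + 1) / (k.factorial : ℝ) := one_mul _
      have hrsplit : (∑' k : ℕ, (t ^ 2 * q k - q (k + 1)) / (k.factorial : ℝ))
          = t ^ 2 * (∑' k, q k / (k.factorial : ℝ)) - ∑' k, q (k + 1) / (k.factorial : ℝ) := by
        rw [tsum_congr (fun k =>
          show (t ^ 2 * q k - q (k + 1)) / (k.factorial : ℝ)
            = t ^ 2 * (q k / (k.factorial : ℝ)) - q (k + 1) / (k.factorial : ℝ) from by ring)]
        exact ((h1.hasSum.mul_left (t ^ 2)).sub h2.hasSum).tsum_eq
      have hS1pos : 0 < ∑' k, q k / (k.factorial : ℝ) := by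
        have hqj : 0 < q (j : ℕ) := Complex.normSq_pos.mpr hj'
        have hterm : 0 < q (j : ℕ) / (((j : ℕ).factorial : ℕ) : ℝ) :=
          div_pos hqj (by positivity)
        exact lt_of_lt_of_le hterm (Summable.le_tsum h1 _ (fun k _ => div_nonneg (hqnn k) (by positivity)))
      rw [hrsplit]
      nlinarith [mul_le_mul_of_nonneg_right htN (le_of_lt hS1pos)]
end

section
/- If p is a nonzero polynomial, f is an entire function, and the product p·f belongs to the Fock space Φ (i.e., ∫_ℂ |p(z)f(z)|² e^{−|z|²} dA < ∞), then f ∈ Φ (i.e., ∫_ℂ |f(z)|² e^{−|z|²} dA < ∞). -/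
open MeasureTheory

/-- If `p` is a nonzero polynomial, `f` entire, and `p·f` lies in the
Fock space (`∫ |p f|² e^{−|z|²} dA < ∞`), then `f` lies in the Fock space. -/
theorem stmt15 (p : Polynomial ℂ) (hp : p ≠ 0) (f : ℂ → ℂ)
    (hf : Differentiable ℂ f)
    (hpf : Integrable
      (fun z : ℂ => ‖p.eval z * f z‖ ^ 2 * Real.exp (-‖z‖ ^ 2)) volume) :
    Integrable (fun z : ℂ => ‖f z‖ ^ 2 * Real.exp (-‖z‖ ^ 2)) volume := by
  -- Find c > 0 and R such that ‖p.eval z‖ ≥ c for ‖z‖ ≥ R.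
  obtain ⟨c, hc, R, hR⟩ : ∃ c > (0:ℝ), ∃ R : ℝ, ∀ z : ℂ, R ≤ ‖z‖ → c ≤ ‖p.eval z‖ := by
    rcases eq_or_lt_of_le (Polynomial.zero_le_degree_iff.mpr hp) with hdeg | hdeg
    · -- p is a nonzero constant
      have hpc : p = Polynomial.C (p.coeff 0) := Polynomial.eq_C_of_degree_le_zero hdeg.ge
      have ha : p.coeff 0 ≠ 0 := fun h => hp (by rw [hpc, h]; simp)
      exact ⟨‖p.coeff 0‖, norm_pos_iff.mpr ha, 0, fun z _ => by rw [hpc]; simp⟩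
    · have := p.tendsto_norm_atTop hdeg (tendsto_norm_cocompact_atTop (E := ℂ))
      rw [Filter.tendsto_atTop] at this
      have h1 := this 1
      rw [Filter.eventually_iff, Filter.mem_cocompact] at h1
      obtain ⟨K, hK, hsub⟩ := h1
      obtain ⟨r, hr⟩ := hK.isBounded.subset_closedBall 0
      refine ⟨1, one_pos, r + 1, fun z hz => hsub ?_⟩
      intro hzK
      have := hr hzK
      rw [Metric.mem_closedBall, dist_zero_right] at this
      linarith
  have hcont : Continuous (fun z : ℂ => ‖f z‖ ^ 2 * Real.exp (-‖z‖ ^ 2)) := by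
    have := hf.continuous; fun_prop
  have hmeas : AEStronglyMeasurable (fun z : ℂ => ‖f z‖ ^ 2 * Real.exp (-‖z‖ ^ 2)) volume :=
    hcont.aestronglyMeasurable
  -- split
  rw [← integrableOn_univ, ← Set.union_compl_self (Metric.closedBall (0:ℂ) R)]
  apply IntegrableOn.union
  · exact hcont.continuousOn.integrableOn_compact (isCompact_closedBall 0 R)
  · -- on the complement, bound by c⁻² * |pf|² e^{-|z|²}
    have hint : IntegrableOn
        (fun z : ℂ => c⁻¹ ^ 2 * (‖p.eval z * f z‖ ^ 2 * Real.exp (-‖z‖ ^ 2)))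
        (Metric.closedBall (0:ℂ) R)ᶜ volume :=
      (hpf.const_mul _).integrableOn
    apply hint.mono' hmeas.restrict
    rw [MeasureTheory.ae_restrict_iff' measurableSet_closedBall.compl]
    filter_upwards with z hz
    simp only [Set.mem_compl_iff, Metric.mem_closedBall, dist_zero_right, not_le] at hz
    have hcz : c ≤ ‖p.eval z‖ := hR z hz.le
    have hb : ‖f z‖ ≤ c⁻¹ * ‖p.eval z * f z‖ := by
      rw [norm_mul, ← mul_assoc]
      calc ‖f z‖ = 1 * ‖f z‖ := (one_mul _).symm
        _ ≤ (c⁻¹ * ‖p.eval z‖) * ‖f z‖ := by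
            apply mul_le_mul_of_nonneg_right _ (norm_nonneg _)
            rw [le_inv_mul_iff₀ hc]; simpa using hcz
    have hpos := Real.exp_pos (-‖z‖ ^ 2)
    rw [Real.norm_of_nonneg (by positivity)]
    calc ‖f z‖ ^ 2 * Real.exp (-‖z‖ ^ 2)
        ≤ (c⁻¹ * ‖p.eval z * f z‖) ^ 2 * Real.exp (-‖z‖ ^ 2) := by
          apply mul_le_mul_of_nonneg_right _ hpos.le
          exact pow_le_pow_left₀ (norm_nonneg _) hb 2
      _ = c⁻¹ ^ 2 * (‖p.eval z * f z‖ ^ 2 * Real.exp (-‖z‖ ^ 2)) := by ring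
end

section
/- Let u = √3·(2^{−n})_{n≥1} ∈ ℓ², a unit vector, and let H = u^⊥ ⊆ ℓ², regarded as a Hilbert space of functions on ℕ. Then every multiplier of H is constant: if ψ : ℕ → ℂ satisfies ψ·x ∈ H for all x ∈ H, then ψ(n) = ψ(1) for all n. -/
open ComplexConjugate

namespace lp

variable {𝕜 ι : Type*} [RCLike 𝕜]

theorem inner_single_add_single [DecidableEq ι] (u : lp (fun _ : ι => 𝕜) 2) (i j : ι)
    (a b : 𝕜) :
    inner 𝕜 u (lp.single 2 i a + lp.single 2 j b) = conj (u i) * a + conj (u j) * b := by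
  rw [inner_add_right, lp.inner_single_right, lp.inner_single_right, RCLike.inner_apply,
    RCLike.inner_apply, mul_comm a, mul_comm b]

theorem eq_single_add_single_of_apply_eq_mul [DecidableEq ι] {ψ : ι → 𝕜}
    {y : lp (fun _ : ι => 𝕜) 2} {i j : ι} {a b : 𝕜}
    (hy : ∀ k, y k = ψ k *
      (lp.single 2 i a + lp.single 2 j b : lp (fun _ : ι => 𝕜) 2) k) :
    y = lp.single 2 i (ψ i * a) + lp.single 2 j (ψ j * b) := by
  ext k
  simp only [hy, lp.coeFn_add, Pi.add_apply, lp.single_apply, mul_add, Pi.single_apply]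
  split_ifs <;> simp_all

end lp

variable {𝕜 ι : Type*} [RCLike 𝕜]

def MultipliesOrthogonal (u : lp (fun _ : ι => 𝕜) 2) (ψ : ι → 𝕜) : Prop :=
  ∀ x : lp (fun _ : ι => 𝕜) 2, inner 𝕜 u x = 0 →
    ∃ y : lp (fun _ : ι => 𝕜) 2, (∀ n, y n = ψ n * x n) ∧ inner 𝕜 u y = 0

/-- Testing against `conj (u j) eᵢ - conj (u i) eⱼ ∈ u^⊥` gives
`conj (u i) conj (u j) (ψ i - ψ j) = 0`. -/
theorem MultipliesOrthogonal.apply_eq {u : lp (fun _ : ι => 𝕜) 2} {ψ : ι → 𝕜}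
    (hψ : MultipliesOrthogonal u ψ) {i j : ι} (hi : u i ≠ 0) (hj : u j ≠ 0) :
    ψ i = ψ j := by
  classical
  have hx : inner 𝕜 u (lp.single 2 i (conj (u j)) + lp.single 2 j (-conj (u i))) = 0 := by
    rw [lp.inner_single_add_single]
    ring
  obtain ⟨y, hy, hyu⟩ := hψ _ hx
  rw [lp.eq_single_add_single_of_apply_eq_mul hy, lp.inner_single_add_single] at hyu
  have h : conj (u i) * conj (u j) * (ψ i - ψ j) = 0 := by linear_combination hyu
  simpa [sub_eq_zero, hi, hj] using h

/-- Let `u = √3·(2^{−n})_{n≥1}` (here indexed by `ℕ`, `u n = √3/2^{n+1}`),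
a unit vector of `ℓ²`, and `H = u^⊥`. Every multiplier of `H` is constant: if
`ψ : ℕ → ℂ` is such that for each `x ∈ H` the pointwise product `ψ·x` is again an
element of `H`, then `ψ n = ψ 0` for all `n`. -/
theorem stmt17 (u : lp (fun _ : ℕ => ℂ) 2)
    (hu : ∀ n : ℕ, u n = ((Real.sqrt 3 / 2 ^ (n + 1) : ℝ) : ℂ))
    (ψ : ℕ → ℂ)
    (hmul : ∀ x : lp (fun _ : ℕ => ℂ) 2, (inner ℂ u x : ℂ) = 0 →
      ∃ y : lp (fun _ : ℕ => ℂ) 2, (∀ n, y n = ψ n * x n) ∧ (inner ℂ u y : ℂ) = 0) :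
    ∀ n : ℕ, ψ n = ψ 0 := by
  have hu_ne : ∀ n, u n ≠ 0 := fun n => by
    rw [hu n]
    exact Complex.ofReal_ne_zero.mpr (by positivity)
  exact fun n => MultipliesOrthogonal.apply_eq hmul (hu_ne n) (hu_ne 0)
end
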